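/- Let d ≥ 1, a > 0, let U be an odd complex polynomial (U(−w) = −U(w)), set V(z) = U(z^d) and ρ(z) = exp(−a|z|² + i·(V(z) + conj(V(z)))); this ρ satisfies conditions (I) and (II). Define τ(ℓ) = (−1)^{d−1} if ℓ ≡ d−1 (mod d) and τ(ℓ) = 1 otherwise. Then for every complex polynomial f and every polynomial g of weight ℓ, one has ⟨f' + i·V'·f, g⟩ = −τ(ℓ)·a·⟨f, z·g⟩. -/

import Mathlib

open MeasureTheory Polynomial Complex

/-- The weight-`ℓ` component (mod `d`) of a polynomial: the sum of its monomials
whose degree is congruent to `ℓ` mod `d`. -/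
noncomputable def weightComp (d ℓ : ℕ) (f : Polynomial ℂ) : Polynomial ℂ :=
  ∑ k ∈ f.support.filter (fun k => k % d = ℓ), Polynomial.monomial k (f.coeff k)

/-- A polynomial has weight `ℓ` (mod `d`) if all its monomials have degree `≡ ℓ [MOD d]`. -/
def HasWeight (d ℓ : ℕ) (f : Polynomial ℂ) : Prop :=
  ∀ k ∈ f.support, k % d = ℓ

/-- `σg(z) = Σ_{ℓ=0}^{d-1} (-ε)^{-ℓ} g_ℓ(ε z)`. -/
noncomputable def sigmaMap (d : ℕ) (ε : ℂ) (g : Polynomial ℂ) (z : ℂ) : ℂ :=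
  ∑ ℓ ∈ Finset.range d, (-ε) ^ (-(ℓ : ℤ)) * (weightComp d ℓ g).eval (ε * z)

/-- The pairing `⟨f,g⟩ = ∫_ℂ f(z) conj(σg(z)) ρ(z) dx dy`. -/
noncomputable def genPairing (d : ℕ) (ε : ℂ) (ρ : ℂ → ℂ) (f g : Polynomial ℂ) : ℂ :=
  ∫ z : ℂ, f.eval z * (starRingEnd ℂ) (sigmaMap d ε g z) * ρ z

/-- Condition (I): `ρ` is measurable and `∫_ℂ |z|^n |ρ(z)| dx dy < ∞` for all `n`. -/
def CondI (ρ : ℂ → ℂ) : Prop :=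
  Measurable ρ ∧
  ∀ n : ℕ, MeasureTheory.Integrable (fun z : ℂ => ‖z‖ ^ n * ‖ρ z‖)

/-- Condition (II): `ρ(ε z) = conj(ρ(z))` for every `ε` with `ε^d = -1`. -/
def CondII (d : ℕ) (ρ : ℂ → ℂ) : Prop :=
  ∀ ε : ℂ, ε ^ d = -1 → ∀ z : ℂ, ρ (ε * z) = (starRingEnd ℂ) (ρ z)

/-! For `ρ = exp (-a |z|² + i V + i V̄)` and polynomials `R`, `S`, the function
`F = R · S̄ · ρ` has Wirtinger derivative `∂F = ((R' + i V' R) S̄ - a z̄ R S̄) ρ`, because `S̄` and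
`V̄` are antiholomorphic. Since `F` and its derivatives decay like a Gaussian, `∫ ∂F = 0`, which
is the identity `∫ (R' + i V' R) S̄ ρ = a ∫ R · conj (z S) · ρ`. For `g` of weight `ℓ`, `σg` only
sees `g_ℓ = g`, so `σg(z) = (-ε)^{-ℓ} g(εz)` and `σ(zg)(z) = (-ε)^{-((ℓ+1) mod d)} ε z g(εz)`;
with `S = g(ε ·)` both pairings are multiples of the two integrals, and `ε^d = -1` turns the ratio
of the constants into `-τ(ℓ)`. Condition (II) holds because `|ε| = 1` and
`V(εz) = U(-z^d) = -V(z)`. -/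

open Filter ComplexConjugate

theorem integrable_norm_pow_mul_exp_neg_mul_sq {E : Type*} [NormedAddCommGroup E]
    [NormedSpace ℝ E] [Nontrivial E] [FiniteDimensional ℝ E] [MeasurableSpace E] [BorelSpace E]
    (μ : Measure E) [μ.IsAddHaarMeasure] {b : ℝ} (hb : 0 < b) (n : ℕ) :
    Integrable (fun x : E => ‖x‖ ^ n * Real.exp (-b * ‖x‖ ^ 2)) μ := by
  rw [integrable_fun_norm_addHaar μ (f := fun y => y ^ n * Real.exp (-b * y ^ 2))]
  refine (integrableOn_rpow_mul_exp_neg_mul_sq hb (s := (Module.finrank ℝ E - 1 + n : ℕ))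
    (neg_one_lt_zero.trans_le (Nat.cast_nonneg _))).congr_fun (fun y _ => ?_) measurableSet_Ioi
  simp only [Real.rpow_natCast, smul_eq_mul, pow_add]
  ring

theorem norm_eval_le_sum_norm_coeff_mul {𝕜 : Type*} [NormedField 𝕜] (P : 𝕜[X]) (x : 𝕜) :
    ‖P.eval x‖ ≤ ∑ k ∈ P.support, ‖P.coeff k‖ * ‖x‖ ^ k := by
  rw [eval_eq_sum, Polynomial.sum_def]
  refine (norm_sum_le _ _).trans_eq (Finset.sum_congr rfl fun k _ => ?_)
  rw [norm_mul, norm_pow]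

theorem integrable_norm_eval_mul_exp_neg_mul_sq {𝕜 : Type*} [RCLike 𝕜] [MeasurableSpace 𝕜]
    [BorelSpace 𝕜] (μ : Measure 𝕜) [μ.IsAddHaarMeasure] {b : ℝ} (hb : 0 < b) (P : 𝕜[X]) :
    Integrable (fun x => ‖P.eval x‖ * Real.exp (-b * ‖x‖ ^ 2)) μ := by
  refine (integrable_finsetSum P.support fun k _ =>
    (integrable_norm_pow_mul_exp_neg_mul_sq μ hb k).const_mul ‖P.coeff k‖).mono' ?_
    (Eventually.of_forall fun x => ?_)
  · exact (P.continuous.norm.mul (by fun_prop)).aestronglyMeasurable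
  · rw [norm_mul, norm_norm, Real.norm_of_nonneg (Real.exp_pos _).le]
    simp_rw [← mul_assoc, ← Finset.sum_mul]
    exact mul_le_mul_of_nonneg_right (norm_eval_le_sum_norm_coeff_mul P x) (Real.exp_pos _).le

theorem integral_hasFDerivAt_apply_eq_zero {E G : Type*} [NormedAddCommGroup E]
    [NormedSpace ℝ E] [FiniteDimensional ℝ E] [MeasurableSpace E] [BorelSpace E]
    {μ : Measure E} [μ.IsAddHaarMeasure] [NormedAddCommGroup G] [NormedSpace ℝ G]
    {g : E → G} {g' : E → E →L[ℝ] G} {v : E} (hg : Integrable g μ)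
    (hg' : Integrable (fun x => g' x v) μ) (hd : ∀ x, HasFDerivAt g (g' x) x) :
    ∫ x, g' x v ∂μ = 0 := by
  have := integral_bilinear_hasFDerivAt_right_eq_neg_left_of_integrable
    (B := ContinuousLinearMap.lsmul ℝ ℝ) (f := fun _ => (1 : ℝ)) (f' := fun _ => 0) (v := v)
    (μ := μ) (by simp) (by simpa using hg') (by simpa using hg)
    (fun x _ => hasFDerivAt_const 1 x) (fun x _ => hd x)
  simpa using this

noncomputable def wirtingerCLM (α β : ℂ) : ℂ →L[ℝ] ℂ :=
  α • ContinuousLinearMap.id ℝ ℂ + β • Complex.conjCLE.toContinuousLinearMap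

@[simp]
theorem wirtingerCLM_apply (α β v : ℂ) : wirtingerCLM α β v = α * v + β * conj v := by
  simp [wirtingerCLM]

theorem integral_eq_zero_of_hasFDerivAt_wirtingerCLM {F α β : ℂ → ℂ} (hF : Integrable F)
    (hα : Integrable α) (hβ : Integrable β)
    (hd : ∀ z, HasFDerivAt F (wirtingerCLM (α z) (β z)) z) :
    ∫ z, α z = 0 := by
  have h1 := integral_hasFDerivAt_apply_eq_zero (v := 1) hF
    (by simp only [wirtingerCLM_apply, mul_one, map_one]; exact hα.add hβ) hd
  have h2 := integral_hasFDerivAt_apply_eq_zero (v := I) hF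
    (by simp only [wirtingerCLM_apply, conj_I]; exact (hα.mul_const I).add (hβ.mul_const (-I))) hd
  simp only [wirtingerCLM_apply, mul_one, map_one, conj_I] at h1 h2
  rw [integral_add hα hβ] at h1
  rw [integral_add (hα.mul_const I) (hβ.mul_const (-I)), integral_mul_const,
    integral_mul_const] at h2
  -- `F' z 1 - I * F' z I = 2 * α z`
  linear_combination (h1 - I * h2) / 2 + ((∫ z, α z) - ∫ z, β z) / 2 * I_sq

noncomputable def gaussianWeight (a : ℝ) (V : ℂ[X]) (z : ℂ) : ℂ :=
  cexp (-(a : ℂ) * (‖z‖ : ℂ) ^ 2 + I * (V.eval z + conj (V.eval z)))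

theorem norm_gaussianWeight (a : ℝ) (V : ℂ[X]) (z : ℂ) :
    ‖gaussianWeight a V z‖ = Real.exp (-a * ‖z‖ ^ 2) := by
  rw [gaussianWeight, Complex.norm_exp]
  congr 1
  simp [← Complex.ofReal_pow]

theorem continuous_gaussianWeight (a : ℝ) (V : ℂ[X]) : Continuous (gaussianWeight a V) := by
  unfold gaussianWeight
  fun_prop

theorem gaussianWeight_eq_cexp_mul_conj (a : ℝ) (V : ℂ[X]) :
    gaussianWeight a V
      = fun z => cexp (-(a : ℂ) * (z * conj z) + I * (V.eval z + conj (V.eval z))) := by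
  funext z
  rw [gaussianWeight, Complex.mul_conj, Complex.normSq_eq_norm_sq]
  push_cast
  rfl

theorem gaussianWeight_mul_eq_conj (a : ℝ) {V : ℂ[X]} {ε z : ℂ} (hε : ‖ε‖ = 1)
    (hV : V.eval (ε * z) = -V.eval z) :
    gaussianWeight a V (ε * z) = conj (gaussianWeight a V z) := by
  rw [gaussianWeight, gaussianWeight, ← Complex.exp_conj, norm_mul, hε, one_mul, hV]
  congr 1
  simp only [map_add, map_mul, map_neg, map_pow, conj_ofReal, conj_I, conj_conj]
  ring

noncomputable def weightedProd (a : ℝ) (V R S : ℂ[X]) (z : ℂ) : ℂ :=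
  R.eval z * conj (S.eval z) * gaussianWeight a V z

theorem weightedProd_C_mul_right (a : ℝ) (V R S : ℂ[X]) (c z : ℂ) :
    weightedProd a V R (C c * S) z = conj c * weightedProd a V R S z := by
  simp only [weightedProd, eval_mul, eval_C, map_mul]
  ring

theorem continuous_weightedProd (a : ℝ) (V R S : ℂ[X]) : Continuous (weightedProd a V R S) :=
  (R.continuous.mul S.continuous.star).mul (continuous_gaussianWeight a V)

theorem integrable_weightedProd {a : ℝ} (ha : 0 < a) (V R S : ℂ[X]) :
    Integrable (weightedProd a V R S) := by
  refine (integrable_norm_eval_mul_exp_neg_mul_sq volume ha (R * S)).mono'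
    (continuous_weightedProd a V R S).aestronglyMeasurable (Eventually.of_forall fun z => ?_)
  rw [weightedProd, norm_mul, norm_mul, RCLike.norm_conj, norm_gaussianWeight, eval_mul, norm_mul]

theorem hasFDerivAt_weightedProd (a : ℝ) (V R S : ℂ[X]) (z : ℂ) :
    HasFDerivAt (weightedProd a V R S)
      (wirtingerCLM
        (weightedProd a V (derivative R + C I * derivative V * R) S z
          - a * weightedProd a V R (X * S) z)
        (weightedProd a V R (derivative S - C I * derivative V * S) z
          - a * weightedProd a V (X * R) S z)) z := by
  have holo : ∀ P : ℂ[X], HasFDerivAt (fun z => P.eval z)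
      ((ContinuousLinearMap.smulRight (1 : ℂ →L[ℂ] ℂ) (P.derivative.eval z)).restrictScalars ℝ)
      z :=
    fun P => (P.hasDerivAt z).hasFDerivAt.restrictScalars ℝ
  have hexp := (((hasFDerivAt_id (𝕜 := ℝ) z).mul (hasFDerivAt_id z).star).const_mul
    (-(a : ℂ))).add (((holo V).add (holo V).star).const_mul I) |>.cexp
  have hprod := ((holo R).mul (holo S).star).mul hexp
  refine (hprod.congr_fderiv ?_).congr_of_eventuallyEq (Eventually.of_forall fun w => ?_)
  · refine ContinuousLinearMap.ext fun v => ?_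
    simp only [weightedProd, gaussianWeight_eq_cexp_mul_conj, wirtingerCLM_apply,
      RCLike.star_def, Pi.mul_apply, Pi.add_apply, id_eq, add_apply, smul_apply,
      ContinuousLinearMap.comp_apply, ContinuousLinearMap.id_apply,
      ContinuousLinearMap.coe_restrictScalars', ContinuousLinearMap.smulRight_apply,
      one_apply_eq_self, ContinuousLinearEquiv.coe_coe, starL'_apply, smul_eq_mul, eval_add,
      eval_sub, eval_mul, eval_C, eval_X, map_mul, map_sub, conj_I]
    ring
  · simp [weightedProd, gaussianWeight_eq_cexp_mul_conj]

theorem integral_weightedProd_derivative {a : ℝ} (ha : 0 < a) (V R S : ℂ[X]) :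
    ∫ z, weightedProd a V (derivative R + C I * derivative V * R) S z
      = a * ∫ z, weightedProd a V R (X * S) z := by
  have hint := integrable_weightedProd ha V
  have h := integral_eq_zero_of_hasFDerivAt_wirtingerCLM (hint R S)
    ((hint _ S).sub ((hint R (X * S)).const_mul _))
    ((hint R _).sub ((hint (X * R) S).const_mul _)) (hasFDerivAt_weightedProd a V R S)
  simp only [Pi.sub_apply] at h
  rwa [integral_sub (hint _ S) ((hint R (X * S)).const_mul _), integral_const_mul,
    sub_eq_zero] at h

theorem weightComp_of_hasWeight {d ℓ : ℕ} {g : ℂ[X]} (hg : HasWeight d ℓ g) :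
    weightComp d ℓ g = g := by
  rw [weightComp, Finset.filter_true_of_mem hg, ← Polynomial.sum_def, sum_monomial_eq]

theorem weightComp_eq_zero_of_hasWeight {d ℓ ℓ' : ℕ} {g : ℂ[X]} (hg : HasWeight d ℓ g)
    (h : ℓ' ≠ ℓ) : weightComp d ℓ' g = 0 := by
  rw [weightComp, Finset.filter_false_of_mem fun k hk hk' => h (hk'.symm.trans (hg k hk)),
    Finset.sum_empty]

theorem sigmaMap_of_hasWeight {d ℓ : ℕ} (ε : ℂ) {g : ℂ[X]} (hℓ : ℓ < d)
    (hg : HasWeight d ℓ g) (z : ℂ) :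
    sigmaMap d ε g z = (-ε) ^ (-(ℓ : ℤ)) * g.eval (ε * z) := by
  rw [sigmaMap, Finset.sum_eq_single_of_mem ℓ (Finset.mem_range.mpr hℓ),
    weightComp_of_hasWeight hg]
  intro ℓ' _ hne
  rw [weightComp_eq_zero_of_hasWeight hg hne, eval_zero, mul_zero]

theorem hasWeight_X_mul {d ℓ : ℕ} {g : ℂ[X]} (hℓ : ℓ < d) (hg : HasWeight d ℓ g) :
    HasWeight d ((ℓ + 1) % d) (X * g) := by
  rintro (_ | m) hk
  · simp at hk
  · rw [mem_support_iff, coeff_X_mul, ← mem_support_iff] at hk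
    exact Nat.ModEq.add_right 1 ((hg m hk).trans (Nat.mod_eq_of_lt hℓ).symm)

theorem genPairing_of_hasWeight {d ℓ : ℕ} (ε : ℂ) (ρ : ℂ → ℂ) (f : ℂ[X]) {g : ℂ[X]}
    (hℓ : ℓ < d) (hg : HasWeight d ℓ g) :
    genPairing d ε ρ f g
      = conj ((-ε) ^ (-(ℓ : ℤ))) * ∫ z, f.eval z * conj ((g.comp (C ε * X)).eval z) * ρ z := by
  rw [genPairing, ← integral_const_mul]
  congr 1 with z
  rw [sigmaMap_of_hasWeight ε hℓ hg, eval_comp, eval_mul, eval_C, eval_X, map_mul]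
  ring

theorem norm_eq_one_of_pow_eq_neg_one {ε : ℂ} {d : ℕ} (hε : ε ^ d = -1) : ‖ε‖ = 1 := by
  refine norm_eq_one_of_pow_eq_one (n := 2 * d) (by rw [pow_mul', hε]; norm_num) ?_
  rintro h
  obtain rfl : d = 0 := by omega
  norm_num at hε

theorem neg_zpow_neg_eq_of_pow_eq_neg_one {d ℓ : ℕ} {ε : ℂ} (hε : ε ^ d = -1) (hℓ : ℓ < d) :
    (-ε) ^ (-(ℓ : ℤ))
      = -((if ℓ % d = d - 1 then (-1 : ℝ) ^ (d - 1) else 1 : ℝ) : ℂ)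
        * ((-ε) ^ (-(((ℓ + 1) % d : ℕ) : ℤ)) * ε) := by
  have hε0 : ε ≠ 0 := by
    rintro rfl
    rw [zero_pow (by omega)] at hε
    norm_num at hε
  rw [Nat.mod_eq_of_lt hℓ]
  rcases (Nat.succ_le_of_lt hℓ).lt_or_eq with hlt | rfl
  · rw [if_neg (by omega), Nat.mod_eq_of_lt hlt, Nat.cast_add_one, neg_add,
      zpow_add₀ (neg_ne_zero.mpr hε0)]
    simp [hε0]
  · rw [if_pos (by omega), Nat.mod_self, Nat.succ_sub_one, zpow_neg, zpow_natCast]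
    simp only [Nat.cast_zero, neg_zero, zpow_zero, one_mul, ofReal_pow, ofReal_neg, ofReal_one]
    refine inv_eq_of_mul_eq_one_right ?_
    have hs : ((-1 : ℂ) ^ ℓ) ^ 2 = 1 := by rw [← pow_mul, pow_mul', neg_one_sq, one_pow]
    rw [neg_pow]
    rw [Nat.succ_eq_add_one] at hε
    linear_combination (-((-1 : ℂ) ^ ℓ) ^ 2) * hε + hs

theorem stmt_11_general (d : ℕ) (a : ℝ) (ha : 0 < a)
    (U : Polynomial ℂ) (hU : ∀ w : ℂ, U.eval (-w) = -U.eval w)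
    (V : Polynomial ℂ) (hV : V = U.comp (X ^ d))
    (ρ : ℂ → ℂ)
    (hρ : ρ = fun z : ℂ => Complex.exp (-(a : ℂ) * (‖z‖ : ℂ) ^ 2 +
      Complex.I * (V.eval z + (starRingEnd ℂ) (V.eval z))))
    (τ : ℕ → ℝ)
    (hτ : ∀ ℓ : ℕ, τ ℓ = if ℓ % d = d - 1 then (-1 : ℝ) ^ (d - 1) else 1)
    (ε : ℂ) (hε : ε ^ d = -1) :
    (CondI ρ ∧ CondII d ρ) ∧
    ∀ (f g : Polynomial ℂ) (ℓ : ℕ), ℓ < d → HasWeight d ℓ g →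
      genPairing d ε ρ (derivative f + C Complex.I * derivative V * f) g =
        -(τ ℓ : ℂ) * (a : ℂ) * genPairing d ε ρ f (X * g) := by
  obtain rfl : ρ = gaussianWeight a V := hρ
  refine ⟨⟨⟨(continuous_gaussianWeight a V).measurable, fun n => ?_⟩, ?_⟩, fun f g ℓ hℓ hg => ?_⟩
  · simpa only [norm_gaussianWeight] using integrable_norm_pow_mul_exp_neg_mul_sq volume ha n
  · intro ε' hε' z
    refine gaussianWeight_mul_eq_conj a (norm_eq_one_of_pow_eq_neg_one hε') ?_
    simp only [hV, eval_comp, eval_pow, eval_X, mul_pow, hε', neg_one_mul, hU]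
  · have hXg : (X * g).comp (C ε * X) = C ε * (X * g.comp (C ε * X)) := by
      rw [mul_comp, X_comp]
      ring
    have hscalar := congrArg conj (neg_zpow_neg_eq_of_pow_eq_neg_one hε hℓ)
    rw [← hτ, map_mul, map_neg, conj_ofReal, map_mul] at hscalar
    rw [genPairing_of_hasWeight ε _ _ hℓ hg,
      genPairing_of_hasWeight ε _ _ (Nat.mod_lt _ (by omega)) (hasWeight_X_mul hℓ hg), hXg]
    change _ * ∫ z, weightedProd a V _ _ z = _ * (_ * ∫ z, weightedProd a V _ _ z)
    simp only [weightedProd_C_mul_right, integral_const_mul, integral_weightedProd_derivative ha]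
    rw [hscalar]
    ring

theorem stmt_11 (d : ℕ) (hd : 1 ≤ d) (a : ℝ) (ha : 0 < a)
    (U : Polynomial ℂ) (hU : ∀ w : ℂ, U.eval (-w) = -U.eval w)
    (V : Polynomial ℂ) (hV : V = U.comp (X ^ d))
    (ρ : ℂ → ℂ)
    (hρ : ρ = fun z : ℂ => Complex.exp (-(a : ℂ) * (‖z‖ : ℂ) ^ 2 +
      Complex.I * (V.eval z + (starRingEnd ℂ) (V.eval z))))
    (τ : ℕ → ℝ)
    (hτ : ∀ ℓ : ℕ, τ ℓ = if ℓ % d = d - 1 then (-1 : ℝ) ^ (d - 1) else 1)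
    (ε : ℂ) (hε : ε ^ d = -1) :
    (CondI ρ ∧ CondII d ρ) ∧
    ∀ (f g : Polynomial ℂ) (ℓ : ℕ), ℓ < d → HasWeight d ℓ g →
      genPairing d ε ρ (derivative f + C Complex.I * derivative V * f) g =
        -(τ ℓ : ℂ) * (a : ℂ) * genPairing d ε ρ f (X * g) :=
  stmt_11_general d a ha U hU V hV ρ hρ τ hτ ε hε
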